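/- Let ρ be an n×n density matrix with eigenvalues 0 ≤ λ₁ ≤ λ₂ ≤ ⋯ ≤ λ_n and let A, B be n×n self-adjoint complex matrices. Then (λ_n + λ₁)²·|Tr[ρ[A,B]]|² ≤ 4·(λ_n − λ₁)²·V_ρ(A)·V_ρ(B), where [A,B] = AB − BA. Moreover Tr[ρ[A₀,B₀]] = Tr[ρ[A,B]]. -/

import Mathlib

open Matrix ComplexOrder

/-- `A₀ = A - Tr[ρA]·I`, the centered operator. -/
noncomputable def shift {n : ℕ} (ρ A : Matrix (Fin n) (Fin n) ℂ) : Matrix (Fin n) (Fin n) ℂ :=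
  A - (ρ * A).trace • (1 : Matrix (Fin n) (Fin n) ℂ)

/-- `V_ρ(A) = Tr[ρA²] - (Tr[ρA])²` (a real number for self-adjoint `A` and density `ρ`). -/
noncomputable def variance {n : ℕ} (ρ A : Matrix (Fin n) (Fin n) ℂ) : ℝ :=
  ((ρ * (A * A)).trace - ((ρ * A).trace) ^ 2).re

/-- the q-commutator `[A,B]_q = AB - q·BA`. -/
noncomputable def qComm {n : ℕ} (q : ℝ) (A B : Matrix (Fin n) (Fin n) ℂ) :
    Matrix (Fin n) (Fin n) ℂ :=
  A * B - (q : ℂ) • (B * A)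

/-- the q-anti-commutator `{A,B}_q = AB + q·BA`. -/
noncomputable def qAnti {n : ℕ} (q : ℝ) (A B : Matrix (Fin n) (Fin n) ℂ) :
    Matrix (Fin n) (Fin n) ℂ :=
  A * B + (q : ℂ) • (B * A)

/-- `lam` lists the eigenvalues of `ρ` (with multiplicity) in increasing order. -/
def IsOrderedEigenvalues {n : ℕ} {ρ : Matrix (Fin n) (Fin n) ℂ}
    (hρ : ρ.IsHermitian) (lam : Fin n → ℝ) : Prop :=
  Monotone lam ∧ ∃ σ : Equiv.Perm (Fin n), ∀ i, lam i = hρ.eigenvalues (σ i)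

/-!
In an eigenbasis of `ρ` with eigenvalues `pⱼ ∈ [m, M]`, write `a = A₀`, `b = B₀`. Then
`Tr[ρ[a,b]] = ∑ⱼₖ (pⱼ - pₖ) aⱼₖ bₖⱼ` and, since `a` is Hermitian,
`2 V_ρ(A) = ∑ⱼₖ (pⱼ + pₖ) |aⱼₖ|²`. The elementary bound `(M + m)|x - y| ≤ (M - m)(x + y)` on
`[m, M]` with `m ≥ 0` trades the weights `|pⱼ - pₖ|` for `pⱼ + pₖ`, and Cauchy–Schwarz with
these nonnegative weights finishes the proof.
-/

open Finset

theorem commutator_sub_smul_one {S R : Type*} [CommSemiring S] [Ring R] [Algebra S R]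
    (a b : R) (c d : S) :
    (a - c • 1) * (b - d • 1) - (b - d • 1) * (a - c • 1) = a * b - b * a := by
  simp only [sub_mul, mul_sub, smul_sub, smul_mul_assoc, mul_smul_comm, one_mul, mul_one,
    smul_comm c d (1 : R)]
  abel

theorem add_mul_abs_sub_le_sub_mul_add {m M x y : ℝ} (hm : 0 ≤ m) (hx : x ∈ Set.Icc m M)
    (hy : y ∈ Set.Icc m M) : (M + m) * |x - y| ≤ (M - m) * (x + y) := by
  obtain ⟨hxm, hxM⟩ := hx
  obtain ⟨hym, hyM⟩ := hy
  rcases le_total x y with h | h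
  · rw [abs_of_nonpos (by linarith)]; nlinarith
  · rw [abs_of_nonneg (by linarith)]; nlinarith

theorem sq_add_mul_sum_abs_sub_mul_le {κ : Type*} (s : Finset κ) {u v x y : κ → ℝ} {m M : ℝ}
    (hm : 0 ≤ m) (hu : ∀ i, u i ∈ Set.Icc m M) (hv : ∀ i, v i ∈ Set.Icc m M)
    (hx : ∀ i, 0 ≤ x i) (hy : ∀ i, 0 ≤ y i) :
    (M + m) ^ 2 * (∑ i ∈ s, |u i - v i| * (x i * y i)) ^ 2 ≤
      (M - m) ^ 2 * ((∑ i ∈ s, (u i + v i) * x i ^ 2) * ∑ i ∈ s, (u i + v i) * y i ^ 2) := by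
  have hw : ∀ i, 0 ≤ u i + v i := fun i => by linarith [(hu i).1, (hv i).1]
  have hxy : ∀ i, 0 ≤ x i * y i := fun i => mul_nonneg (hx i) (hy i)
  have hlhs : 0 ≤ (M + m) * ∑ i ∈ s, |u i - v i| * (x i * y i) := by
    rw [mul_sum]
    exact sum_nonneg fun i _ =>
      mul_nonneg (by linarith [(hu i).1, (hu i).2]) (mul_nonneg (abs_nonneg _) (hxy i))
  have hpointwise : (M + m) * ∑ i ∈ s, |u i - v i| * (x i * y i) ≤
      (M - m) * ∑ i ∈ s, (u i + v i) * (x i * y i) := by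
    rw [mul_sum, mul_sum]
    refine sum_le_sum fun i _ => ?_
    rw [← mul_assoc, ← mul_assoc (M - m)]
    exact mul_le_mul_of_nonneg_right (add_mul_abs_sub_le_sub_mul_add hm (hu i) (hv i)) (hxy i)
  have hcauchy : (∑ i ∈ s, (u i + v i) * (x i * y i)) ^ 2 ≤
      (∑ i ∈ s, (u i + v i) * x i ^ 2) * ∑ i ∈ s, (u i + v i) * y i ^ 2 :=
    sum_sq_le_sum_mul_sum_of_sq_le_mul s (fun i _ => mul_nonneg (hw i) (sq_nonneg _))
      (fun i _ => mul_nonneg (hw i) (sq_nonneg _)) fun i _ => le_of_eq (by ring)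
  calc (M + m) ^ 2 * (∑ i ∈ s, |u i - v i| * (x i * y i)) ^ 2
      = ((M + m) * ∑ i ∈ s, |u i - v i| * (x i * y i)) ^ 2 := by ring
    _ ≤ ((M - m) * ∑ i ∈ s, (u i + v i) * (x i * y i)) ^ 2 := by gcongr
    _ = (M - m) ^ 2 * (∑ i ∈ s, (u i + v i) * (x i * y i)) ^ 2 := by ring
    _ ≤ _ := by gcongr

namespace Matrix

variable {ι 𝕜 : Type*} [RCLike 𝕜]

theorem IsHermitian.norm_apply_symm {a : Matrix ι ι 𝕜} (ha : a.IsHermitian) (j k : ι) :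
    ‖a k j‖ = ‖a j k‖ := by
  rw [← ha.apply j k, norm_star]

variable [Fintype ι]

theorem IsHermitian.star_trace_mul {a b : Matrix ι ι 𝕜} (ha : a.IsHermitian)
    (hb : b.IsHermitian) : star (a * b).trace = (a * b).trace := by
  rw [← trace_conjTranspose, conjTranspose_mul, ha.eq, hb.eq, trace_mul_comm]

variable [DecidableEq ι]

theorem trace_diagonal_mul {R : Type*} [NonUnitalNonAssocSemiring R] (d : ι → R)
    (X : Matrix ι ι R) : (diagonal d * X).trace = ∑ j, d j * X j j := by
  simp only [trace, diag_apply, diagonal_mul]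

theorem trace_diagonal_mul_commutator {R : Type*} [CommRing R] (d : ι → R)
    (a b : Matrix ι ι R) :
    (diagonal d * (a * b - b * a)).trace = ∑ j, ∑ k, (d j - d k) * (a j k * b k j) := by
  have hswap : ∑ j, ∑ k, d j * (b j k * a k j) = ∑ j, ∑ k, d k * (a j k * b k j) := by
    rw [sum_comm]
    exact sum_congr rfl fun j _ => sum_congr rfl fun k _ => by ring
  rw [trace_diagonal_mul]
  simp only [sub_apply, mul_apply, mul_sub, mul_sum, sub_mul, sum_sub_distrib, hswap]

theorem re_trace_diagonal_mul_mul_self {a : Matrix ι ι 𝕜} (ha : a.IsHermitian) (p : ι → ℝ) :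
    RCLike.re (diagonal (RCLike.ofReal ∘ p) * (a * a)).trace = ∑ j, ∑ k, p j * ‖a j k‖ ^ 2 := by
  have hentry : ∀ j k, a j k * a k j = (‖a j k‖ ^ 2 : ℝ) := fun j k => by
    rw [← ha.apply k j, RCLike.star_def, RCLike.mul_conj]; push_cast; rfl
  simp only [trace_diagonal_mul, mul_apply, hentry, Function.comp_apply, mul_sum, map_sum,
    ← RCLike.ofReal_mul, RCLike.ofReal_re]

theorem two_mul_re_trace_diagonal_mul_mul_self {a : Matrix ι ι 𝕜} (ha : a.IsHermitian)
    (p : ι → ℝ) :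
    2 * RCLike.re (diagonal (RCLike.ofReal ∘ p) * (a * a)).trace =
      ∑ j, ∑ k, (p j + p k) * ‖a j k‖ ^ 2 := by
  have hswap : ∑ j, ∑ k, p k * ‖a j k‖ ^ 2 = ∑ j, ∑ k, p j * ‖a j k‖ ^ 2 := by
    rw [sum_comm]
    simp only [ha.norm_apply_symm]
  simp only [re_trace_diagonal_mul_mul_self ha, add_mul, sum_add_distrib, hswap]
  ring

theorem norm_trace_diagonal_mul_commutator_le (p : ι → ℝ) {a b : Matrix ι ι 𝕜}
    (hb : b.IsHermitian) :
    ‖(diagonal (RCLike.ofReal ∘ p) * (a * b - b * a)).trace‖ ≤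
      ∑ jk : ι × ι, |p jk.1 - p jk.2| * (‖a jk.1 jk.2‖ * ‖b jk.1 jk.2‖) := by
  rw [trace_diagonal_mul_commutator, ← Fintype.sum_prod_type']
  refine (norm_sum_le _ _).trans (sum_le_sum fun jk _ => ?_)
  simp only [Function.comp_apply, norm_mul, ← RCLike.ofReal_sub, RCLike.norm_ofReal,
    hb.norm_apply_symm, le_refl]

theorem sq_add_mul_sq_norm_trace_diagonal_mul_commutator_le {p : ι → ℝ} {m M : ℝ} (hm : 0 ≤ m)
    (hp : ∀ j, p j ∈ Set.Icc m M) {a b : Matrix ι ι 𝕜} (ha : a.IsHermitian)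
    (hb : b.IsHermitian) :
    (M + m) ^ 2 * ‖(diagonal (RCLike.ofReal ∘ p) * (a * b - b * a)).trace‖ ^ 2 ≤
      4 * (M - m) ^ 2 * RCLike.re (diagonal (RCLike.ofReal ∘ p) * (a * a)).trace *
        RCLike.re (diagonal (RCLike.ofReal ∘ p) * (b * b)).trace := by
  have hweighted := sq_add_mul_sum_abs_sub_mul_le univ hm (u := fun jk : ι × ι => p jk.1)
    (v := fun jk => p jk.2) (x := fun jk => ‖a jk.1 jk.2‖) (y := fun jk => ‖b jk.1 jk.2‖)
    (fun jk => hp jk.1) (fun jk => hp jk.2) (fun _ => norm_nonneg _) (fun _ => norm_nonneg _)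
  simp only [Fintype.sum_prod_type, ← two_mul_re_trace_diagonal_mul_mul_self ha,
    ← two_mul_re_trace_diagonal_mul_mul_self hb] at hweighted
  calc (M + m) ^ 2 * ‖(diagonal (RCLike.ofReal ∘ p) * (a * b - b * a)).trace‖ ^ 2
      ≤ (M + m) ^ 2 *
          (∑ jk : ι × ι, |p jk.1 - p jk.2| * (‖a jk.1 jk.2‖ * ‖b jk.1 jk.2‖)) ^ 2 := by
        gcongr
        exact norm_trace_diagonal_mul_commutator_le p hb
    _ ≤ _ := by rw [Fintype.sum_prod_type]; exact hweighted.trans_eq (by ring)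

theorem IsHermitian.trace_mul_eq_trace_diagonal_mul {A : Matrix ι ι 𝕜} (hA : A.IsHermitian)
    (X : Matrix ι ι 𝕜) :
    (A * X).trace = (diagonal (RCLike.ofReal ∘ hA.eigenvalues) *
      Unitary.conjStarAlgAut 𝕜 _ (star hA.eigenvectorUnitary) X).trace := by
  rw [← hA.conjStarAlgAut_star_eigenvectorUnitary, ← map_mul,
    Unitary.conjStarAlgAut_star_apply, trace_mul_cycle,
    Unitary.mul_star_self_of_mem hA.eigenvectorUnitary.2, one_mul]

theorem IsHermitian.sq_add_mul_sq_norm_trace_mul_commutator_le {ρ A B : Matrix ι ι 𝕜}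
    (hρ : ρ.IsHermitian) {m M : ℝ} (hm : 0 ≤ m) (hρmM : ∀ j, hρ.eigenvalues j ∈ Set.Icc m M)
    (hA : A.IsHermitian) (hB : B.IsHermitian) :
    (M + m) ^ 2 * ‖(ρ * (A * B - B * A)).trace‖ ^ 2 ≤
      4 * (M - m) ^ 2 * RCLike.re (ρ * (A * A)).trace * RCLike.re (ρ * (B * B)).trace := by
  set φ := Unitary.conjStarAlgAut 𝕜 _ (star hρ.eigenvectorUnitary)
  have hφ {X : Matrix ι ι 𝕜} (hX : X.IsHermitian) : (φ X).IsHermitian :=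
    (hX.isSelfAdjoint.map φ).isHermitian
  simp only [hρ.trace_mul_eq_trace_diagonal_mul, map_sub, map_mul]
  exact sq_add_mul_sq_norm_trace_diagonal_mul_commutator_le hm hρmM (hφ hA) (hφ hB)

end Matrix

theorem IsOrderedEigenvalues.eigenvalues_mem_Icc {n : ℕ}
    {ρ : Matrix (Fin (n + 1)) (Fin (n + 1)) ℂ} {hρ : ρ.IsHermitian} {lam : Fin (n + 1) → ℝ}
    (hlam : IsOrderedEigenvalues hρ lam) (j : Fin (n + 1)) :
    hρ.eigenvalues j ∈ Set.Icc (lam 0) (lam (Fin.last n)) := by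
  obtain ⟨hmono, σ, hσ⟩ := hlam
  rw [← σ.apply_symm_apply j, ← hσ]
  exact ⟨hmono (Fin.zero_le _), hmono (Fin.le_last _)⟩

theorem IsOrderedEigenvalues.nonneg {n : ℕ} {ρ : Matrix (Fin n) (Fin n) ℂ}
    (hρ : ρ.PosSemidef) {lam : Fin n → ℝ} (hlam : IsOrderedEigenvalues hρ.1 lam) (i : Fin n) :
    0 ≤ lam i := by
  obtain ⟨-, σ, hσ⟩ := hlam
  exact hσ i ▸ hρ.eigenvalues_nonneg (σ i)

theorem shift_commutator {n : ℕ} (ρ A B : Matrix (Fin n) (Fin n) ℂ) :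
    shift ρ A * shift ρ B - shift ρ B * shift ρ A = A * B - B * A :=
  commutator_sub_smul_one A B _ _

theorem isHermitian_shift {n : ℕ} {ρ A : Matrix (Fin n) (Fin n) ℂ} (hρ : ρ.IsHermitian)
    (hA : A.IsHermitian) : (shift ρ A).IsHermitian := by
  rw [shift, IsHermitian, conjTranspose_sub, conjTranspose_smul, conjTranspose_one,
    hρ.star_trace_mul hA, hA.eq]

theorem variance_eq_re_trace_mul_shift_mul_shift {n : ℕ} {ρ : Matrix (Fin n) (Fin n) ℂ}
    (htr : ρ.trace = 1) (A : Matrix (Fin n) (Fin n) ℂ) :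
    variance ρ A = (ρ * (shift ρ A * shift ρ A)).trace.re := by
  simp only [variance, shift, sub_mul, mul_sub, smul_sub, smul_mul_assoc, mul_smul_comm,
    one_mul, mul_one, trace_sub, trace_smul, htr, smul_eq_mul]
  ring_nf

theorem refined_robertson_uncertainty_general {n : ℕ}
    (ρ A B : Matrix (Fin (n + 1)) (Fin (n + 1)) ℂ)
    (hρ : ρ.PosSemidef) (htr : ρ.trace = 1)
    (hA : A.IsHermitian) (hB : B.IsHermitian)
    (lam : Fin (n + 1) → ℝ) (hlam : IsOrderedEigenvalues hρ.1 lam) :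
    (lam (Fin.last n) + lam 0) ^ 2 *
        ‖(ρ * (A * B - B * A)).trace‖ ^ 2 ≤
      4 * (lam (Fin.last n) - lam 0) ^ 2 * variance ρ A * variance ρ B ∧
    (ρ * (shift ρ A * shift ρ B - shift ρ B * shift ρ A)).trace =
      (ρ * (A * B - B * A)).trace := by
  refine ⟨?_, by rw [shift_commutator]⟩
  rw [← shift_commutator ρ A B, variance_eq_re_trace_mul_shift_mul_shift htr,
    variance_eq_re_trace_mul_shift_mul_shift htr]
  exact hρ.1.sq_add_mul_sq_norm_trace_mul_commutator_le (hlam.nonneg hρ 0)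
    hlam.eigenvalues_mem_Icc (isHermitian_shift hρ.1 hA) (isHermitian_shift hρ.1 hB)

/-- Refined Robertson uncertainty relation (`q = 1` case):
`(λₙ + λ₁)²·|Tr[ρ[A,B]]|² ≤ 4·(λₙ − λ₁)²·V_ρ(A)·V_ρ(B)`, together with
`Tr[ρ[A₀,B₀]] = Tr[ρ[A,B]]`. -/
theorem refined_robertson_uncertainty {n : ℕ}
    (ρ A B : Matrix (Fin (n + 1)) (Fin (n + 1)) ℂ)
    (hρ : ρ.PosSemidef) (htr : ρ.trace = 1)
    (hA : A.IsHermitian) (hB : B.IsHermitian)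
    (lam : Fin (n + 1) → ℝ) (hlam : IsOrderedEigenvalues hρ.1 lam)
    (hlam0 : 0 ≤ lam 0) :
    (lam (Fin.last n) + lam 0) ^ 2 *
        ‖(ρ * (A * B - B * A)).trace‖ ^ 2 ≤
      4 * (lam (Fin.last n) - lam 0) ^ 2 * variance ρ A * variance ρ B ∧
    (ρ * (shift ρ A * shift ρ B - shift ρ B * shift ρ A)).trace =
      (ρ * (A * B - B * A)).trace :=
  refined_robertson_uncertainty_general ρ A B hρ htr hA hB lam hlam
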